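/- Let W be a multigraphon with ρ(W) ∈ (0,∞), let W_t be defined by W_t(x,y,k) = Σ_{h=0}^∞ W(x,y,h)·q(t,h,k, D(W,x)D(W,y)/ρ(W)) for x≠y and W_t(x,x,k) = 1[2|k]·Σ_{h=0}^∞ W(x,x,2h)·q(t,h,k/2, D(W,x)²/(2ρ(W))), and define the multigraphons W_∞(x,y,k) := p(k, D(W,x)D(W,y)/ρ(W)) for x≠y with W_∞(x,x,k) := 1[2|k]·p(k/2, D(W,x)²/(2ρ(W))), and V(x,y,k) := p(k, F_0^{-1}(x)F_0^{-1}(y)/ρ(W)) for x≠y with V(x,x,k) := 1[2|k]·p(k/2, F_0^{-1}(x)²/(2ρ(W))), where F_0(z) = Leb{y∈[0,1] : D(W,y) ≤ z} and F_0^{-1}(x) = min{z : F_0(z) ≥ x}. Then for every k ∈ ℕ and every A ∈ A_k: lim_{t→∞} t_=(A, W_t) = t_=(A, W_∞) and t_=(A, W_∞) = t_=(A, V), i.e. W_∞ and V are equivalent multigraphons (W_∞ ≅ V). -/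

import Mathlib

open MeasureTheory Filter Set
open scoped Classical ENNReal Topology BigOperators

noncomputable section

/-- `B : ℕ → ℕ → ℕ` is the adjacency matrix of a multigraph on vertex set `{0,…,n-1}`:
symmetric, even diagonal entries (loops counted twice), vanishing outside `[0,n)²`. -/
def IsAdjOn (n : ℕ) (B : ℕ → ℕ → ℕ) : Prop :=
  (∀ i j, B i j = B j i) ∧ (∀ i, 2 ∣ B i i) ∧ ∀ i j, n ≤ i ∨ n ≤ j → B i j = 0

/-- Degree `d(B,i)` of vertex `i` in a multigraph on `n` vertices. -/
def degB (n : ℕ) (B : ℕ → ℕ → ℕ) (i : ℕ) : ℕ := ∑ j ∈ Finset.range n, B i j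

/-- Adjacency matrix of a multigraph on `n` vertices with `m` edges. -/
def IsAdjOnM (n m : ℕ) (B : ℕ → ℕ → ℕ) : Prop :=
  IsAdjOn n B ∧ ∑ i ∈ Finset.range n, ∑ j ∈ Finset.range n, B i j = 2 * m

/-- Top-left `k × k` submatrix (set to zero outside). -/
def subMat (k : ℕ) (B : ℕ → ℕ → ℕ) : ℕ → ℕ → ℕ :=
  fun i j => if i < k ∧ j < k then B i j else 0

/-- Induced homomorphism density `t_=(A,B)` of a `k`-vertex multigraph in an `n`-vertex one. -/
def tEqB (k n : ℕ) (A B : ℕ → ℕ → ℕ) : ℝ :=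
  ((Finset.univ.filter fun φ : Fin k → Fin n =>
      ∀ i j : Fin k, A i j = B (φ i) (φ j)).card : ℝ) / (n : ℝ) ^ k

/-- A multigraphon: symmetric, probability distribution on ℕ in each fibre over `[0,1]²`,
no odd diagonal values. -/
def IsMultigraphon (W : ℝ → ℝ → ℕ → ℝ) : Prop :=
  Measurable (fun p : ℝ × ℝ × ℕ => W p.1 p.2.1 p.2.2) ∧
  (∀ x y k, 0 ≤ W x y k ∧ W x y k ≤ 1) ∧
  (∀ x y k, W x y k = W y x k) ∧
  (∀ x ∈ Icc (0:ℝ) 1, ∀ y ∈ Icc (0:ℝ) 1, (∑' k : ℕ, W x y k) = 1) ∧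
  (∀ x k, W x x (2 * k + 1) = 0)

/-- Induced homomorphism density `t_=(A,W)` of a multigraph in a multigraphon. -/
def tEqW (k : ℕ) (A : ℕ → ℕ → ℕ) (W : ℝ → ℝ → ℕ → ℝ) : ℝ :=
  ∫ x : Fin k → ℝ in Set.univ.pi (fun _ : Fin k => Icc (0:ℝ) 1),
    ∏ i : Fin k, ∏ j ∈ Finset.univ.filter (fun j : Fin k => i ≤ j),
      W (x i) (x j) (A i j)

/-- The average degree `D(W,x)` of a multigraphon at `x`. -/
def degW (W : ℝ → ℝ → ℕ → ℝ) (x : ℝ) : ℝ :=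
  ∫ y in Icc (0:ℝ) 1, ∑' k : ℕ, (k : ℝ) * W x y k

/-- The edge density `ρ(W)` of a multigraphon. -/
def rhoW (W : ℝ → ℝ → ℕ → ℝ) : ℝ := ∫ x in Icc (0:ℝ) 1, degW W x

/-- One step of the edge reconnecting dynamics: the edge `{vold, w}` is replaced by `{vnew, w}`. -/
def stepER (B : ℕ → ℕ → ℕ) (vold w vnew : ℕ) : ℕ → ℕ → ℕ := fun a b =>
  B a b - (if a = vold ∧ b = w then 1 else 0) - (if a = w ∧ b = vold then 1 else 0)
    + (if a = vnew ∧ b = w then 1 else 0) + (if a = w ∧ b = vnew then 1 else 0)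

/-- Transition probability of the edge reconnecting model with parameter `κ`
on multigraphs with `n` vertices and `m` edges. -/
def transER (κ : ℝ) (n m : ℕ) (B B' : ℕ → ℕ → ℕ) : ℝ :=
  ∑ v ∈ Finset.range n, ∑ w ∈ Finset.range n, ∑ u ∈ Finset.range n,
    ((B v w : ℝ) / (2 * m)) * (((degB n B u : ℝ) + κ) / (2 * m + n * κ)) *
      (if B' = stepER B v w u then 1 else 0)

/-- `(X T)_{T≥0}` is an edge reconnecting model with parameter `κ` on `A_n^m`:
a Markov chain with the edge reconnecting transition probabilities. -/
def IsEdgeReconnecting (κ : ℝ) {Ω : Type*} [MeasurableSpace Ω] (μ : Measure Ω)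
    (n m : ℕ) (X : ℕ → Ω → ℕ → ℕ → ℕ) : Prop :=
  (∀ T i j, Measurable fun ω => X T ω i j) ∧
  (∀ T ω, IsAdjOnM n m (X T ω)) ∧
  ∀ (T : ℕ) (past : ℕ → ℕ → ℕ → ℕ) (B' : ℕ → ℕ → ℕ),
    μ {ω | (∀ S ≤ T, X S ω = past S) ∧ X (T + 1) ω = B'} =
      μ {ω | ∀ S ≤ T, X S ω = past S} * ENNReal.ofReal (transER κ n m (past T) B')

/-- Vertex exchangeability of a random adjacency matrix on `n` vertices. -/
def VertexExchangeable {Ω : Type*} [MeasurableSpace Ω] (μ : Measure Ω)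
    (n : ℕ) (X0 : Ω → ℕ → ℕ → ℕ) : Prop :=
  ∀ τ : Equiv.Perm ℕ, (∀ i, n ≤ i → τ i = i) →
    ∀ B : ℕ → ℕ → ℕ, μ {ω | X0 ω = B} = μ {ω | (fun i j => X0 ω (τ i) (τ j)) = B}

/-- Poisson point probability `p(k,λ)`. -/
def poiP (k : ℕ) (l : ℝ) : ℝ := Real.exp (-l) * l ^ k / (Nat.factorial k : ℝ)

/-- Binomial point probability `b(k,n,p)`. -/
def binP (k n : ℕ) (p : ℝ) : ℝ := (n.choose k : ℝ) * p ^ k * (1 - p) ^ (n - k)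

/-- `q(t,h,k,μ)`: time-`t` transition probability from `h` to `k` of the M/M/∞ queue with
arrival rate `μ` and service rate 1. -/
def qMM (t : ℝ) (h k : ℕ) (μ : ℝ) : ℝ :=
  ∑ l ∈ Finset.range (k + 1), binP l h (Real.exp (-t)) * poiP (k - l) ((1 - Real.exp (-t)) * μ)

/-- The multigraphon `W_t` describing the edge reconnecting model on the `n²` time scale. -/
def WtER (W : ℝ → ℝ → ℕ → ℝ) (t : ℝ) : ℝ → ℝ → ℕ → ℝ := fun x y k =>
  if x = y then
    (if 2 ∣ k then
      ∑' h : ℕ, W x x (2 * h) * qMM t h (k / 2) (degW W x ^ 2 / (2 * rhoW W))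
     else 0)
  else ∑' h : ℕ, W x y h * qMM t h k (degW W x * degW W y / rhoW W)

/-- Gamma density `g(x,α,β)`. -/
def gamP (x α β : ℝ) : ℝ :=
  if 0 < x then x ^ (α - 1) * (β ^ α * Real.exp (-(β * x)) / Real.Gamma α) else 0

/-- `τ(α,t) = α/(e^{αt}-1)`. -/
def tauCIR (α t : ℝ) : ℝ := α / (Real.exp (α * t) - 1)

/-- Transition density `f(t,z,y)` of the Cox–Ingersoll–Ross process with parameters `κ, ρ`. -/
def cirDens (κ ρ t z y : ℝ) : ℝ :=
  ∑' i : ℕ, poiP i (z * tauCIR (κ / ρ) t) * gamP y ((κ : ℝ) + i) (tauCIR (κ / ρ) t + κ / ρ)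

/-- The measure `dF₀` where `F₀(x) = Leb{y ∈ [0,1] : D(W,y) ≤ x}`: the push-forward of
Lebesgue measure on `[0,1]` under the average degree function. -/
def F0meas (W : ℝ → ℝ → ℕ → ℝ) : Measure ℝ :=
  Measure.map (degW W) (volume.restrict (Icc (0:ℝ) 1))

/-- The distribution function `F₀(x) = Leb{y ∈ [0,1] : D(W,y) ≤ x}`. -/
def F0fun (W : ℝ → ℝ → ℕ → ℝ) (x : ℝ) : ℝ :=
  (volume {y ∈ Icc (0:ℝ) 1 | degW W y ≤ x}).toReal

/-- Generalized inverse `F₀⁻¹(x) = min{z : F₀(z) ≥ x}`. -/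
def F0inv (W : ℝ → ℝ → ℕ → ℝ) (x : ℝ) : ℝ := sInf {z : ℝ | x ≤ F0fun W z}

/-- The mixed CIR density `f(t,y) = ∫₀^∞ f(t,z,y) dF₀(z)`. -/
def fCIRmix (κ ρ : ℝ) (W : ℝ → ℝ → ℕ → ℝ) (t y : ℝ) : ℝ :=
  ∫ z, cirDens κ ρ t z y ∂(F0meas W)

/-- The distribution function `F_t(x) = ∫₀ˣ f(t,y) dy`. -/
def Fcir (κ ρ : ℝ) (W : ℝ → ℝ → ℕ → ℝ) (t x : ℝ) : ℝ :=
  ∫ y in Ioc (0:ℝ) x, fCIRmix κ ρ W t y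

/-- Generalized inverse `F_t⁻¹(x) = min{z : F_t(z) ≥ x}`. -/
def FcirInv (κ ρ : ℝ) (W : ℝ → ℝ → ℕ → ℝ) (t x : ℝ) : ℝ :=
  sInf {z : ℝ | x ≤ Fcir κ ρ W t z}

/-- The multigraphon `Ŵ_t` describing the edge reconnecting model on the `n³` time scale. -/
def WhatER (κ : ℝ) (W : ℝ → ℝ → ℕ → ℝ) (t : ℝ) : ℝ → ℝ → ℕ → ℝ := fun x y k =>
  if x = y then
    (if 2 ∣ k then poiP (k / 2) (FcirInv κ (rhoW W) W t x ^ 2 / (2 * rhoW W)) else 0)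
  else poiP k (FcirInv κ (rhoW W) W t x * FcirInv κ (rhoW W) W t y / rhoW W)

/-- The product measure on `ℝ^k` of `k` i.i.d. coordinates with density `f(t,·)`. -/
def cirPi (κ ρ : ℝ) (W : ℝ → ℝ → ℕ → ℝ) (t : ℝ) (k : ℕ) : Measure (Fin k → ℝ) :=
  volume.withDensity fun z => ∏ i : Fin k, ENNReal.ofReal (fCIRmix κ ρ W t (z i))

/-- Condition (E): uniform exponential moment bound for the initial multigraphs. -/
def CondE (B : (n : ℕ) → ℕ → ℕ → ℕ) : Prop :=
  ∃ lam : ℝ, 0 < lam ∧ ∃ C : ℝ, ∀ n : ℕ,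
    (∑ i ∈ Finset.range n, ∑ j ∈ (Finset.range n).filter (fun j => i < j),
        Real.exp (lam * (B n i j : ℝ))) ≤ C * (n.choose 2 : ℝ) ∧
    (∑ i ∈ Finset.range n, Real.exp (lam * (B n i i : ℝ))) ≤ C * (n : ℝ)

/-- Convergence `B_n → W` of a sequence of multigraphs to a multigraphon. -/
def GraphSeqConvTo (B : (n : ℕ) → ℕ → ℕ → ℕ) (W : ℝ → ℝ → ℕ → ℝ) : Prop :=
  ∀ (k : ℕ) (A : ℕ → ℕ → ℕ), IsAdjOn k A →
    Tendsto (fun n => tEqB k n A (B n)) atTop (𝓝 (tEqW k A W))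


/-- The multigraphon `W_∞ = lim_{t→∞} W_t`: Poisson fibres driven by the average degrees. -/
def WinfER (W : ℝ → ℝ → ℕ → ℝ) : ℝ → ℝ → ℕ → ℝ := fun x y k =>
  if x = y then
    (if 2 ∣ k then poiP (k / 2) (degW W x ^ 2 / (2 * rhoW W)) else 0)
  else poiP k (degW W x * degW W y / rhoW W)

/-- The multigraphon `V`: Poisson fibres driven by `F₀⁻¹`. -/
def VER (W : ℝ → ℝ → ℕ → ℝ) : ℝ → ℝ → ℕ → ℝ := fun x y k =>
  if x = y then
    (if 2 ∣ k then poiP (k / 2) (F0inv W x ^ 2 / (2 * rhoW W)) else 0)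
  else poiP k (F0inv W x * F0inv W y / rhoW W)

/-! As `t → ∞` the M/M/∞ transition probability `q(t,h,k,μ)` tends to the Poisson probability
`p(k,μ)` whatever the initial state `h`, so `W_t → W_∞` pointwise on `[0,1]²`; all kernels take
values in `[0,1]`, and dominated convergence gives the limit of the densities.

`W_∞` and `V` are both Poisson multigraphons driven by a function of the vertex, `D(W,·)` and
`F₀⁻¹` respectively. Off the null set where two coordinates coincide, the integrand of `t_=(A,·)`
only sees the values of the driving function, so `t_=(A,·)` depends only on the law of that
function under Lebesgue measure on `[0,1]`; by inverse transform sampling `F₀⁻¹` and `D(W,·)`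
have the same law. -/

lemma poiP_nonneg (k : ℕ) {l : ℝ} (hl : 0 ≤ l) : 0 ≤ poiP k l := by
  unfold poiP; positivity

lemma poiP_le_one (k : ℕ) {l : ℝ} (hl : 0 ≤ l) : poiP k l ≤ 1 := by
  have h := Real.pow_div_factorial_le_exp l hl k
  calc poiP k l = Real.exp (-l) * (l ^ k / k.factorial) := mul_div_assoc _ _ _
    _ ≤ Real.exp (-l) * Real.exp l := by gcongr
    _ = 1 := by rw [← Real.exp_add, neg_add_cancel, Real.exp_zero]

@[fun_prop]
lemma continuous_poiP (k : ℕ) : Continuous (poiP k) := by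
  unfold poiP; fun_prop

lemma binP_nonneg (k n : ℕ) {p : ℝ} (h0 : 0 ≤ p) (h1 : p ≤ 1) : 0 ≤ binP k n p := by
  have : 0 ≤ 1 - p := sub_nonneg.2 h1
  unfold binP; positivity

lemma sum_range_binP (n : ℕ) (p : ℝ) : ∑ l ∈ Finset.range (n + 1), binP l n p = 1 := by
  have h := add_pow p (1 - p) n
  rw [add_sub_cancel, one_pow] at h
  rw [h]
  exact Finset.sum_congr rfl fun l _ => by unfold binP; ring

lemma sum_range_binP_le_one (m n : ℕ) {p : ℝ} (h0 : 0 ≤ p) (h1 : p ≤ 1) :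
    ∑ l ∈ Finset.range m, binP l n p ≤ 1 := by
  have hvanish : ∀ l ∉ Finset.range (n + 1), binP l n p = 0 := fun l hl => by
    rw [Finset.mem_range, not_lt] at hl
    simp [binP, Nat.choose_eq_zero_of_lt (Nat.lt_of_succ_le hl)]
  calc ∑ l ∈ Finset.range m, binP l n p
      ≤ ∑ l ∈ Finset.range (max m (n + 1)), binP l n p :=
        Finset.sum_le_sum_of_subset_of_nonneg
          (Finset.range_subset_range.2 (le_max_left _ _)) fun l _ _ => binP_nonneg l n h0 h1
    _ = ∑ l ∈ Finset.range (n + 1), binP l n p :=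
        (Finset.sum_subset (Finset.range_subset_range.2 (le_max_right _ _))
          fun l _ hl => hvanish l hl).symm
    _ = 1 := sum_range_binP n p

section MMInfinityQueue

variable {t μ : ℝ}

lemma exp_neg_mem_Icc (ht : 0 ≤ t) : Real.exp (-t) ∈ Icc (0 : ℝ) 1 :=
  ⟨(Real.exp_pos _).le, Real.exp_le_one_iff.2 (neg_nonpos.2 ht)⟩

lemma qMM_nonneg (ht : 0 ≤ t) (hμ : 0 ≤ μ) (h k : ℕ) : 0 ≤ qMM t h k μ := by
  obtain ⟨hp0, hp1⟩ := exp_neg_mem_Icc ht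
  exact Finset.sum_nonneg fun l _ =>
    mul_nonneg (binP_nonneg l h hp0 hp1) (poiP_nonneg _ (by nlinarith))

lemma qMM_le_one (ht : 0 ≤ t) (hμ : 0 ≤ μ) (h k : ℕ) : qMM t h k μ ≤ 1 := by
  obtain ⟨hp0, hp1⟩ := exp_neg_mem_Icc ht
  calc qMM t h k μ ≤ ∑ l ∈ Finset.range (k + 1), binP l h (Real.exp (-t)) :=
        Finset.sum_le_sum fun l _ => mul_le_of_le_one_right (binP_nonneg l h hp0 hp1)
          (poiP_le_one _ (by nlinarith))
    _ ≤ 1 := sum_range_binP_le_one _ h hp0 hp1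

@[fun_prop]
lemma continuous_qMM (t : ℝ) (h k : ℕ) : Continuous (qMM t h k) := by
  unfold qMM; fun_prop

/-- Only the term `l = 0` survives: `b(l, h, 0) = 0` for `l > 0`. -/
lemma tendsto_qMM_atTop (h k : ℕ) (μ : ℝ) :
    Tendsto (fun t => qMM t h k μ) atTop (𝓝 (poiP k μ)) := by
  have hterm : ∀ l ∈ Finset.range (k + 1),
      Tendsto (fun t => binP l h (Real.exp (-t)) * poiP (k - l) ((1 - Real.exp (-t)) * μ))
        atTop (𝓝 (binP l h 0 * poiP (k - l) ((1 - 0) * μ))) := fun l _ => by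
    have hc : Continuous fun p => binP l h p * poiP (k - l) ((1 - p) * μ) := by
      unfold binP; fun_prop
    exact (hc.tendsto 0).comp Real.tendsto_exp_neg_atTop_nhds_zero
  have hsum :
      ∑ l ∈ Finset.range (k + 1), binP l h 0 * poiP (k - l) ((1 - 0) * μ) = poiP k μ := by
    rw [Finset.sum_eq_single_of_mem 0 (by simp) fun l _ hl => by simp [binP, hl]]
    simp [binP]
  exact hsum ▸ tendsto_finsetSum _ hterm

lemma tsum_mul_qMM_mem_Icc {w : ℕ → ℝ} (hw : HasSum w 1) (hw0 : ∀ h, 0 ≤ w h)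
    (ht : 0 ≤ t) (hμ : 0 ≤ μ) (k : ℕ) : ∑' h, w h * qMM t h k μ ∈ Icc (0 : ℝ) 1 := by
  have h0 : ∀ h, 0 ≤ w h * qMM t h k μ := fun h => mul_nonneg (hw0 h) (qMM_nonneg ht hμ h k)
  have hle : ∀ h, w h * qMM t h k μ ≤ w h := fun h =>
    mul_le_of_le_one_right (hw0 h) (qMM_le_one ht hμ h k)
  refine ⟨tsum_nonneg h0, ?_⟩
  calc ∑' h, w h * qMM t h k μ ≤ ∑' h, w h :=
        (hw.summable.of_nonneg_of_le h0 hle).tsum_le_tsum hle hw.summable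
    _ = 1 := hw.tsum_eq

lemma tendsto_tsum_mul_qMM_atTop {w : ℕ → ℝ} (hw : HasSum w 1) (hw0 : ∀ h, 0 ≤ w h)
    (hμ : 0 ≤ μ) (k : ℕ) :
    Tendsto (fun t => ∑' h, w h * qMM t h k μ) atTop (𝓝 (poiP k μ)) := by
  have hbound : ∀ᶠ t in atTop, ∀ h, ‖w h * qMM t h k μ‖ ≤ w h := by
    filter_upwards [eventually_ge_atTop 0] with t ht h
    rw [Real.norm_of_nonneg (mul_nonneg (hw0 h) (qMM_nonneg ht hμ h k))]
    exact mul_le_of_le_one_right (hw0 h) (qMM_le_one ht hμ h k)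
  have hlim := tendsto_tsum_of_dominated_convergence hw.summable
    (fun h => (tendsto_qMM_atTop h k μ).const_mul (w h)) hbound
  rwa [tsum_mul_right, hw.tsum_eq, one_mul] at hlim

end MMInfinityQueue

namespace IsMultigraphon

variable {W : ℝ → ℝ → ℕ → ℝ}

lemma nonneg (hW : IsMultigraphon W) (x y : ℝ) (k : ℕ) : 0 ≤ W x y k := (hW.2.1 x y k).1

lemma measurable_uncurry (hW : IsMultigraphon W) (k : ℕ) :
    Measurable fun p : ℝ × ℝ => W p.1 p.2 k :=
  hW.1.comp (measurable_fst.prodMk (measurable_snd.prodMk measurable_const))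

lemma hasSum (hW : IsMultigraphon W) {x y : ℝ} (hx : x ∈ Icc (0 : ℝ) 1)
    (hy : y ∈ Icc (0 : ℝ) 1) : HasSum (W x y) 1 := by
  have h := hW.2.2.2.1 x hx y hy
  refine h ▸ (Summable.hasSum ?_)
  by_contra hs
  rw [tsum_eq_zero_of_not_summable hs] at h
  exact zero_ne_one h

lemma hasSum_even (hW : IsMultigraphon W) {x : ℝ} (hx : x ∈ Icc (0 : ℝ) 1) :
    HasSum (fun h => W x x (2 * h)) 1 := by
  refine ((mul_right_injective₀ two_ne_zero).hasSum_iff fun n hn => ?_).2 (hW.hasSum hx hx)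
  obtain ⟨m, rfl⟩ : ∃ m, n = 2 * m + 1 :=
    ⟨n / 2, by_contra fun h => hn ⟨n / 2, show 2 * (n / 2) = n by omega⟩⟩
  exact hW.2.2.2.2 x m

lemma degW_nonneg (hW : IsMultigraphon W) (x : ℝ) : 0 ≤ degW W x :=
  integral_nonneg fun y => tsum_nonneg fun k => mul_nonneg k.cast_nonneg (hW.nonneg x y k)

lemma rhoW_nonneg (hW : IsMultigraphon W) : 0 ≤ rhoW W := integral_nonneg hW.degW_nonneg

lemma measurable_degW (hW : IsMultigraphon W) : Measurable (degW W) := by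
  have h : Measurable fun p : ℝ × ℝ => ∑' k : ℕ, (k : ℝ) * W p.1 p.2 k :=
    Measurable.tsum fun k => measurable_const.mul (hW.measurable_uncurry k)
  exact h.stronglyMeasurable.integral_prod_right'.measurable

end IsMultigraphon

lemma tEqW_eq_integral_pi (k : ℕ) (A : ℕ → ℕ → ℕ) (U : ℝ → ℝ → ℕ → ℝ) :
    tEqW k A U = ∫ x, ∏ i : Fin k, ∏ j ∈ Finset.univ.filter (fun j : Fin k => i ≤ j),
      U (x i) (x j) (A i j) ∂Measure.pi fun _ => volume.restrict (Icc (0 : ℝ) 1) := by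
  rw [tEqW, volume_pi, Measure.restrict_pi_pi]

lemma tendsto_tEqW {ι : Type*} {l : Filter ι} [l.IsCountablyGenerated]
    {U : ι → ℝ → ℝ → ℕ → ℝ} {V : ℝ → ℝ → ℕ → ℝ} (k : ℕ) (A : ℕ → ℕ → ℕ)
    (hmeas : ∀ᶠ s in l, ∀ m, Measurable fun p : ℝ × ℝ => U s p.1 p.2 m)
    (hbound : ∀ᶠ s in l, ∀ x ∈ Icc (0 : ℝ) 1, ∀ y ∈ Icc (0 : ℝ) 1, ∀ m, ‖U s x y m‖ ≤ 1)
    (hlim : ∀ x ∈ Icc (0 : ℝ) 1, ∀ y ∈ Icc (0 : ℝ) 1, ∀ m,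
      Tendsto (fun s => U s x y m) l (𝓝 (V x y m))) :
    Tendsto (fun s => tEqW k A (U s)) l (𝓝 (tEqW k A V)) := by
  simp only [tEqW_eq_integral_pi]
  have hbox : ∀ᵐ x : Fin k → ℝ ∂Measure.pi fun _ => volume.restrict (Icc (0 : ℝ) 1),
      ∀ i, x i ∈ Icc (0 : ℝ) 1 :=
    ae_all_iff.2 fun i => Measure.tendsto_eval_ae_ae (ae_restrict_mem measurableSet_Icc)
  refine tendsto_integral_filter_of_dominated_convergence (fun _ => 1) ?_ ?_
    (integrable_const 1) ?_
  · filter_upwards [hmeas] with s hs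
    refine (Finset.measurable_prod _ fun i _ =>
      Finset.measurable_prod _ fun j _ => ?_).aestronglyMeasurable
    exact (hs (A i j)).comp (f := fun x : Fin k → ℝ => (x i, x j)) (by fun_prop)
  · filter_upwards [hbound] with s hs
    filter_upwards [hbox] with x hx
    rw [norm_prod]
    exact Finset.prod_le_one (fun _ _ => norm_nonneg _) fun i _ => (norm_prod _ _).le.trans <|
      Finset.prod_le_one (fun _ _ => norm_nonneg _) fun j _ => hs _ (hx i) _ (hx j) _
  · filter_upwards [hbox] with x hx
    exact tendsto_finsetProd _ fun i _ => tendsto_finsetProd _ fun j _ =>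
      hlim _ (hx i) _ (hx j) _

section WtER

variable {W : ℝ → ℝ → ℕ → ℝ}

lemma WtER_mem_Icc (hW : IsMultigraphon W) {t : ℝ} (ht : 0 ≤ t) {x y : ℝ}
    (hx : x ∈ Icc (0 : ℝ) 1) (hy : y ∈ Icc (0 : ℝ) 1) (k : ℕ) :
    WtER W t x y k ∈ Icc (0 : ℝ) 1 := by
  have hρ := hW.rhoW_nonneg
  have hdx := hW.degW_nonneg x
  have hdy := hW.degW_nonneg y
  unfold WtER
  split_ifs with hxy
  · subst hxy
    exact tsum_mul_qMM_mem_Icc (hW.hasSum_even hx) (fun _ => hW.nonneg _ _ _) ht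
      (by positivity) _
  · exact ⟨le_rfl, zero_le_one⟩
  · exact tsum_mul_qMM_mem_Icc (hW.hasSum hx hy) (hW.nonneg x y) ht (by positivity) _

lemma tendsto_WtER_atTop (hW : IsMultigraphon W) {x y : ℝ}
    (hx : x ∈ Icc (0 : ℝ) 1) (hy : y ∈ Icc (0 : ℝ) 1) (k : ℕ) :
    Tendsto (fun t => WtER W t x y k) atTop (𝓝 (WinfER W x y k)) := by
  have hρ := hW.rhoW_nonneg
  have hdx := hW.degW_nonneg x
  have hdy := hW.degW_nonneg y
  unfold WtER WinfER
  split_ifs with hxy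
  · subst hxy
    exact tendsto_tsum_mul_qMM_atTop (hW.hasSum_even hx) (fun _ => hW.nonneg _ _ _)
      (by positivity) _
  · exact tendsto_const_nhds
  · exact tendsto_tsum_mul_qMM_atTop (hW.hasSum hx hy) (hW.nonneg x y) (by positivity) _

lemma measurable_WtER (hW : IsMultigraphon W) (t : ℝ) (k : ℕ) :
    Measurable fun p : ℝ × ℝ => WtER W t p.1 p.2 k := by
  have hd := hW.measurable_degW
  refine Measurable.ite (measurableSet_eq_fun measurable_fst measurable_snd) ?_ ?_
  · refine Measurable.ite (MeasurableSet.const _) (Measurable.tsum fun h => ?_) measurable_const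
    refine Measurable.mul ?_ (by fun_prop)
    exact (hW.measurable_uncurry (2 * h)).comp (f := fun p : ℝ × ℝ => (p.1, p.1)) (by fun_prop)
  · exact Measurable.tsum fun h => (hW.measurable_uncurry h).mul (by fun_prop)

lemma tendsto_tEqW_WtER (hW : IsMultigraphon W) (k : ℕ) (A : ℕ → ℕ → ℕ) :
    Tendsto (fun t : ℝ => tEqW k A (WtER W t)) atTop (𝓝 (tEqW k A (WinfER W))) := by
  refine tendsto_tEqW k A (Eventually.of_forall fun t => measurable_WtER hW t) ?_
    fun x hx y hy => tendsto_WtER_atTop hW hx hy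
  filter_upwards [eventually_ge_atTop 0] with t ht x hx y hy m
  obtain ⟨h0, h1⟩ := WtER_mem_Icc hW ht hx hy m
  rwa [Real.norm_of_nonneg h0]

end WtER

open ProbabilityTheory

section Quantile

/-- Outside `(0, 1)` the set may be empty or unbounded below, and `sInf` then returns `0`. -/
def quantile (ν : Measure ℝ) (x : ℝ) : ℝ := sInf {z | x ≤ cdf ν z}

variable (ν : Measure ℝ) {x : ℝ}

lemma bddBelow_setOf_le_cdf (hx : 0 < x) : BddBelow {z | x ≤ cdf ν z} := by
  obtain ⟨a, ha⟩ := eventually_atBot.1 ((tendsto_cdf_atBot ν).eventually (gt_mem_nhds hx))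
  exact ⟨a, fun z hz => le_of_not_gt fun hza => (ha z hza.le).not_ge hz⟩

lemma nonempty_setOf_le_cdf (hx : x < 1) : {z | x ≤ cdf ν z}.Nonempty :=
  ((tendsto_cdf_atTop ν).eventually (eventually_ge_nhds hx)).exists

/-- The infimum defining `quantile ν x` is attained, by right continuity of `cdf ν`. -/
lemma le_cdf_quantile (hx : x < 1) : x ≤ cdf ν (quantile ν x) := by
  set a := quantile ν x
  have hright : Tendsto (cdf ν) (𝓝[>] a) (𝓝 (cdf ν a)) :=
    ((cdf ν).right_continuous a).mono Ioi_subset_Ici_self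
  refine ge_of_tendsto hright (eventually_nhdsWithin_of_forall fun z (hz : a < z) => ?_)
  obtain ⟨s, hs, hsz⟩ := exists_lt_of_csInf_lt (nonempty_setOf_le_cdf ν hx) hz
  exact hs.trans ((cdf ν).mono hsz.le)

lemma quantile_le_iff (hx0 : 0 < x) (hx1 : x < 1) (z : ℝ) :
    quantile ν x ≤ z ↔ x ≤ cdf ν z :=
  ⟨fun h => (le_cdf_quantile ν hx1).trans ((cdf ν).mono h),
    fun h => csInf_le (bddBelow_setOf_le_cdf ν hx0) h⟩

lemma monotoneOn_quantile : MonotoneOn (quantile ν) (Ioo 0 1) :=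
  fun _ hx _ hx' hxx' => (quantile_le_iff ν hx.1 hx.2 _).2 <|
    hxx'.trans (le_cdf_quantile ν hx'.2)

lemma aemeasurable_quantile : AEMeasurable (quantile ν) (volume.restrict (Icc (0 : ℝ) 1)) :=
  Measure.restrict_congr_set (Ioo_ae_eq_Icc (μ := (volume : Measure ℝ))) ▸
    aemeasurable_restrict_of_monotoneOn measurableSet_Ioo (monotoneOn_quantile ν)

lemma map_quantile_volume_Icc [IsProbabilityMeasure ν] :
    (volume.restrict (Icc (0 : ℝ) 1)).map (quantile ν) = ν := by
  have hIoo : volume.restrict (Icc (0 : ℝ) 1) = volume.restrict (Ioo 0 1) :=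
    Measure.restrict_congr_set Ioo_ae_eq_Icc.symm
  refine Measure.ext_of_Iic _ _ fun z => ?_
  have hpre : quantile ν ⁻¹' Iic z ∩ Ioo 0 1 = Iic (cdf ν z) ∩ Ioo 0 1 := by
    ext x
    simp only [mem_inter_iff, mem_preimage, mem_Iic, and_congr_left_iff]
    exact fun hx => quantile_le_iff ν hx.1 hx.2 z
  have hIcc : Iic (cdf ν z) ∩ Icc 0 1 = Icc 0 (cdf ν z) := by
    have := cdf_le_one ν z
    ext y
    simp only [mem_inter_iff, mem_Iic, mem_Icc]
    grind
  rw [Measure.map_apply_of_aemeasurable (aemeasurable_quantile ν) measurableSet_Iic, hIoo,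
    Measure.restrict_apply' measurableSet_Ioo, hpre, ← Measure.restrict_apply' measurableSet_Ioo,
    ← hIoo, Measure.restrict_apply measurableSet_Iic, hIcc, Real.volume_Icc, sub_zero,
    ofReal_cdf]

end Quantile

instance : IsProbabilityMeasure (volume.restrict (Icc (0 : ℝ) 1)) :=
  ⟨by simp [Real.volume_Icc]⟩

lemma IsMultigraphon.isProbabilityMeasure_F0meas {W : ℝ → ℝ → ℕ → ℝ}
    (hW : IsMultigraphon W) : IsProbabilityMeasure (F0meas W) :=
  Measure.isProbabilityMeasure_map hW.measurable_degW.aemeasurable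

lemma IsMultigraphon.F0fun_eq_cdf {W : ℝ → ℝ → ℕ → ℝ} (hW : IsMultigraphon W) :
    F0fun W = cdf (F0meas W) := funext fun z => by
  have := hW.isProbabilityMeasure_F0meas
  rw [cdf_eq_real, measureReal_def, F0meas,
    Measure.map_apply hW.measurable_degW measurableSet_Iic,
    Measure.restrict_apply (hW.measurable_degW measurableSet_Iic), F0fun]
  congr 2
  ext y
  exact and_comm

lemma IsMultigraphon.F0inv_eq_quantile {W : ℝ → ℝ → ℕ → ℝ} (hW : IsMultigraphon W) :
    F0inv W = quantile (F0meas W) := by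
  unfold F0inv quantile
  rw [hW.F0fun_eq_cdf]

lemma ae_injective_volume (k : ℕ) : ∀ᵐ x : Fin k → ℝ, Function.Injective x := by
  simp only [Function.Injective, ae_all_iff]
  intro i j
  by_cases hij : i = j
  · exact Eventually.of_forall fun _ _ => hij
  set L : (Fin k → ℝ) →ₗ[ℝ] ℝ :=
    LinearMap.proj (R := ℝ) (φ := fun _ : Fin k => ℝ) i - LinearMap.proj j
  have hL : L ≠ 0 := fun h => by
    simpa [L, Pi.single_apply, Ne.symm hij] using LinearMap.congr_fun h (Pi.single i 1)
  have hnull : volume (L.ker : Set (Fin k → ℝ)) = 0 :=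
    Measure.addHaar_submodule _ _ (mt LinearMap.ker_eq_top.1 hL)
  filter_upwards [measure_eq_zero_iff_ae_notMem.1 hnull] with x hx hxij
  exact absurd (by simp [L, hxij]) hx

section PoissonGraphon

def poissonGraphon (ρ : ℝ) (f : ℝ → ℝ) : ℝ → ℝ → ℕ → ℝ := fun x y k =>
  if x = y then (if 2 ∣ k then poiP (k / 2) (f x ^ 2 / (2 * ρ)) else 0)
  else poiP k (f x * f y / ρ)

/-- The integrand of `tEqW k A (poissonGraphon ρ f)` at `u = f ∘ x`, except that loops are
recognised by `i = j` instead of `x i = x j`: the two agree off a null set, and this one is a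
function of `u` alone. -/
def poissonWeight (k : ℕ) (A : ℕ → ℕ → ℕ) (ρ : ℝ) (u : Fin k → ℝ) : ℝ :=
  ∏ i : Fin k, ∏ j ∈ Finset.univ.filter (fun j : Fin k => i ≤ j),
    if i = j then (if 2 ∣ A i j then poiP (A i j / 2) (u i ^ 2 / (2 * ρ)) else 0)
    else poiP (A i j) (u i * u j / ρ)

lemma measurable_poissonWeight (k : ℕ) (A : ℕ → ℕ → ℕ) (ρ : ℝ) :
    Measurable (poissonWeight k A ρ) := by
  refine Finset.measurable_prod _ fun i _ => Finset.measurable_prod _ fun j _ => ?_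
  split_ifs <;> fun_prop

lemma tEqW_poissonGraphon (k : ℕ) (A : ℕ → ℕ → ℕ) (ρ : ℝ) {f : ℝ → ℝ}
    (hf : AEMeasurable f (volume.restrict (Icc (0 : ℝ) 1))) :
    tEqW k A (poissonGraphon ρ f) = ∫ u, poissonWeight k A ρ u
      ∂Measure.pi fun _ => (volume.restrict (Icc (0 : ℝ) 1)).map f := by
  have hdistinct : ∀ᵐ x : Fin k → ℝ ∂volume.restrict (univ.pi fun _ => Icc (0 : ℝ) 1),
      Function.Injective x := ae_restrict_of_ae (ae_injective_volume k)
  have hlabels : tEqW k A (poissonGraphon ρ f) =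
      ∫ x in univ.pi fun _ => Icc (0 : ℝ) 1, poissonWeight k A ρ (fun i => f (x i)) := by
    refine integral_congr_ae (hdistinct.mono fun x hx => ?_)
    refine Finset.prod_congr rfl fun i _ => Finset.prod_congr rfl fun j _ => ?_
    simp only [poissonGraphon, hx.eq_iff]
  have hpi := Measure.pi_map_pi (μ := fun _ : Fin k => volume.restrict (Icc (0 : ℝ) 1))
    fun _ => hf
  have hmeas : AEMeasurable (fun x : Fin k → ℝ => fun i => f (x i))
      (Measure.pi fun _ => volume.restrict (Icc (0 : ℝ) 1)) :=
    aemeasurable_pi_lambda _ fun i =>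
      hf.comp_quasiMeasurePreserving (Measure.quasiMeasurePreserving_eval _ i)
  rw [hlabels, volume_pi, Measure.restrict_pi_pi, ← hpi,
    integral_map hmeas (measurable_poissonWeight k A ρ).aestronglyMeasurable]

end PoissonGraphon

theorem Wt_limit_and_equivalence_general
    (W : ℝ → ℝ → ℕ → ℝ) (hW : IsMultigraphon W)
    (k : ℕ) (A : ℕ → ℕ → ℕ) :
    Tendsto (fun t : ℝ => tEqW k A (WtER W t)) atTop (𝓝 (tEqW k A (WinfER W))) ∧
    tEqW k A (WinfER W) = tEqW k A (VER W) := by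
  refine ⟨tendsto_tEqW_WtER hW k A, ?_⟩
  have := hW.isProbabilityMeasure_F0meas
  have hlaw : (volume.restrict (Icc (0 : ℝ) 1)).map (F0inv W) = F0meas W := by
    rw [hW.F0inv_eq_quantile, map_quantile_volume_Icc]
  change tEqW k A (poissonGraphon (rhoW W) (degW W)) =
    tEqW k A (poissonGraphon (rhoW W) (F0inv W))
  rw [tEqW_poissonGraphon k A _ hW.measurable_degW.aemeasurable,
    tEqW_poissonGraphon k A _ (hW.F0inv_eq_quantile ▸ aemeasurable_quantile _), hlaw, F0meas]

/-- `lim_{t→∞} W_t ≅ W_∞ ≅ V`. -/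
theorem Wt_limit_and_equivalence
    (W : ℝ → ℝ → ℕ → ℝ) (hW : IsMultigraphon W)
    (hρpos : 0 < rhoW W) (hρfin : IntegrableOn (degW W) (Icc (0:ℝ) 1))
    (k : ℕ) (A : ℕ → ℕ → ℕ) (hA : IsAdjOn k A) :
    Tendsto (fun t : ℝ => tEqW k A (WtER W t)) atTop (𝓝 (tEqW k A (WinfER W))) ∧
    tEqW k A (WinfER W) = tEqW k A (VER W) :=
  Wt_limit_and_equivalence_general W hW k A

end
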